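/- In a standard SP-structure satisfying Symmetry, Non-negativity, Boundedness, O-Projection, and Factorization, if x is a state and A an ortho-set with p(x,A) > 0, then there is a unique state y ∈ Ā with p(x,y) = p(x,A); moreover this y depends only on the subspace Ā, not on the choice of basis A. -/

import Mathlib

variable {Ω : Type*}

def IsOrtho (p : Ω → Ω → ℝ) (A : Set Ω) : Prop :=
  ∀ x ∈ A, ∀ y ∈ A, x ≠ y → p x y = 0

noncomputable def pSet (p : Ω → Ω → ℝ) (x : Ω) (A : Set Ω) : ℝ :=
  ∑' a : A, p x a

def Symm (p : Ω → Ω → ℝ) : Prop := ∀ x y, p x y = p y x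

def Nonneg (p : Ω → Ω → ℝ) : Prop := ∀ x y, 0 ≤ p x y

def Bounded (p : Ω → Ω → ℝ) : Prop :=
  ∀ (x : Ω) (A : Set Ω), IsOrtho p A →
    Summable (fun a : A => p x a) ∧ pSet p x A ≤ 1

def OProj (p : Ω → Ω → ℝ) : Prop :=
  ∀ (x : Ω) (A : Set Ω), IsOrtho p A → pSet p x A < 1 →
    ∃ y, pSet p y A = 0 ∧ pSet p x A + p x y = 1

def Factor (p : Ω → Ω → ℝ) : Prop :=
  ∀ (x y z : Ω) (A : Set Ω), IsOrtho p A → pSet p y A = 1 → pSet p z A = 1 →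
    p x y = pSet p x A → p x z = p x y * p y z

def Subgen (p : Ω → Ω → ℝ) (A : Set Ω) : Set Ω := {x | pSet p x A = 1}

def IsSubspace (p : Ω → Ω → ℝ) (X : Set Ω) : Prop :=
  ∃ A, IsOrtho p A ∧ X = Subgen p A

def Standard (p : Ω → Ω → ℝ) : Prop := ∀ x y, p x y = 1 → x = y

section SPStructure

variable {p : Ω → Ω → ℝ}

def IsProj (p : Ω → Ω → ℝ) (A : Set Ω) (x y : Ω) : Prop :=
  y ∈ Subgen p A ∧ p x y = pSet p x A

lemma isOrtho_empty (p : Ω → Ω → ℝ) : IsOrtho p ∅ := fun _ h => h.elim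

lemma isOrtho_singleton (p : Ω → Ω → ℝ) (u : Ω) : IsOrtho p {u} := by
  rintro a rfl b rfl hab
  exact (hab rfl).elim

lemma isOrtho_pair (h1 : Symm p) {u v : Ω} (huv : p u v = 0) : IsOrtho p {u, v} := by
  rintro a (rfl | rfl) b (rfl | rfl) hab
  exacts [(hab rfl).elim, huv, (h1 _ _).trans huv, (hab rfl).elim]

lemma pSet_empty (p : Ω → Ω → ℝ) (x : Ω) : pSet p x ∅ = 0 := by simp [pSet]

lemma pSet_singleton (p : Ω → Ω → ℝ) (x u : Ω) : pSet p x {u} = p x u := by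
  simp [pSet]

lemma pSet_pair (p : Ω → Ω → ℝ) (x : Ω) {u v : Ω} (huv : u ≠ v) :
    pSet p x {u, v} = p x u + p x v := by
  classical
  rw [pSet, ← Finset.coe_pair, Finset.tsum_subtype', Finset.sum_pair huv]

lemma apply_eq_zero_of_pSet_eq_zero (h2 : Nonneg p) (h3 : Bounded p) {A : Set Ω}
    (hA : IsOrtho p A) {x a : Ω} (hx : pSet p x A = 0) (ha : a ∈ A) : p x a = 0 :=
  le_antisymm (hx ▸ (h3 x A hA).1.le_tsum ⟨a, ha⟩ fun _ _ => h2 _ _) (h2 x a)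

/-- O-projection onto `∅` yields some `y` with `p w y = 1`, and standardness forces `y = w`. -/
lemma apply_self_eq_one (h4 : OProj p) (hstd : Standard p) (w : Ω) : p w w = 1 := by
  obtain ⟨y, -, hy⟩ := h4 w ∅ (isOrtho_empty p) (by rw [pSet_empty]; norm_num)
  rw [pSet_empty, zero_add] at hy
  rwa [← hstd w y hy] at hy

lemma subset_subgen (h4 : OProj p) (hstd : Standard p) {A : Set Ω} (hA : IsOrtho p A) :
    A ⊆ Subgen p A := by
  intro a ha
  show pSet p a A = 1
  rw [pSet, tsum_eq_single (⟨a, ha⟩ : A) fun b hb =>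
    hA a ha b.1 b.2 fun h => hb (Subtype.ext h.symm)]
  exact apply_self_eq_one h4 hstd a

lemma ne_of_apply_eq_zero (h4 : OProj p) (hstd : Standard p) {u v : Ω} (huv : p u v = 0) :
    u ≠ v := by
  rintro rfl
  simp [apply_self_eq_one h4 hstd u] at huv

lemma isProj_pair (h1 : Symm p) (h4 : OProj p) (hstd : Standard p) {z y a : Ω}
    (hzy : p z y = 0) (hay : p a y = 0) : IsProj p {z, y} a z := by
  refine ⟨subset_subgen h4 hstd (isOrtho_pair h1 hzy) (Set.mem_insert z {y}), ?_⟩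
  rw [pSet_pair p a (ne_of_apply_eq_zero h4 hstd hzy), hay, add_zero]

namespace IsProj

variable {A B : Set Ω} {x y z : Ω}

lemma factor (h5 : Factor p) (hA : IsOrtho p A) (hy : IsProj p A x y)
    (hz : z ∈ Subgen p A) : p x z = p x y * p y z :=
  h5 x y z A hA hy.1 hz hy.2

lemma pSet_eq_mul (h5 : Factor p) (hA : IsOrtho p A) (hy : IsProj p A x y)
    (hB : B ⊆ Subgen p A) : pSet p x B = p x y * pSet p y B := by
  rw [pSet, pSet, ← tsum_mul_left]
  exact tsum_congr fun b => hy.factor h5 hA (hB b.2)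

lemma unique (h5 : Factor p) (hstd : Standard p) (hA : IsOrtho p A) (hpos : pSet p x A ≠ 0)
    (hy : IsProj p A x y) (hz : IsProj p A x z) : y = z := by
  have h := hy.factor h5 hA hz.1
  rw [hz.2, hy.2] at h
  exact hstd y z (mul_left_cancel₀ hpos (by rw [mul_one, ← h]))

lemma of_subgen_eq (h4 : OProj p) (h5 : Factor p) (hstd : Standard p) (hA : IsOrtho p A)
    (hB : IsOrtho p B) (hBA : Subgen p B = Subgen p A) (hy : IsProj p A x y) :
    IsProj p B x y := by
  have hyB : y ∈ Subgen p B := hBA ▸ hy.1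
  refine ⟨hyB, ?_⟩
  rw [hy.pSet_eq_mul h5 hA (hBA ▸ subset_subgen h4 hstd hB), hyB, mul_one]

end IsProj

/-- Complete `A` by the O-projection `y` of `x`, then project `x` onto `{y}ᗮ` to get `z`: the pair
`{z, y}` spans `x`, so factorisation through `z` shows `p x a = p x z * p z a` on `A`, and summing
over `A` forces `z ∈ Ā`. -/
lemma exists_isProj (h1 : Symm p) (h2 : Nonneg p) (h3 : Bounded p) (h4 : OProj p)
    (h5 : Factor p) (hstd : Standard p) {A : Set Ω} (hA : IsOrtho p A) {x : Ω}
    (hpos : 0 < pSet p x A) : ∃ y, IsProj p A x y := by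
  rcases (h3 x A hA).2.lt_or_eq with hlt | heq
  swap
  · exact ⟨x, heq, by rw [apply_self_eq_one h4 hstd, heq]⟩
  obtain ⟨y, hyA, hxy⟩ := h4 x A hA hlt
  obtain ⟨z, hzy, hxz⟩ := h4 x {y} (isOrtho_singleton p y)
    (by rw [pSet_singleton]; linarith)
  rw [pSet_singleton] at hzy hxz
  have hxz' : p x z = pSet p x A := by linarith
  have hxF : x ∈ Subgen p {z, y} := by
    show pSet p x {z, y} = 1
    rw [pSet_pair p x (ne_of_apply_eq_zero h4 hstd hzy)]
    linarith
  have hfac : ∀ a ∈ A, p x a = p x z * p z a := by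
    intro a ha
    have hay : p a y = 0 := h1 a y ▸ apply_eq_zero_of_pSet_eq_zero h2 h3 hA hyA ha
    have := (isProj_pair h1 h4 hstd hzy hay).factor h5 (isOrtho_pair h1 hzy) hxF
    rw [h1 x a, this, h1 a z, h1 z x, mul_comm]
  have hsum : pSet p x A = pSet p x A * pSet p z A := by
    conv_rhs => rw [← hxz', pSet, ← tsum_mul_left]
    exact tsum_congr fun a => hfac a.1 a.2
  exact ⟨z, mul_left_cancel₀ hpos.ne' (by rw [mul_one, ← hsum]), hxz'⟩

end SPStructure

theorem stmt13 (p : Ω → Ω → ℝ) (h1 : Symm p) (h2 : Nonneg p) (h3 : Bounded p)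
    (h4 : OProj p) (h5 : Factor p) (hstd : Standard p)
    (x : Ω) (A : Set Ω) (hA : IsOrtho p A) (hpos : 0 < pSet p x A) :
    (∃! y : Ω, y ∈ Subgen p A ∧ p x y = pSet p x A) ∧
    ∀ B : Set Ω, IsOrtho p B → Subgen p B = Subgen p A →
      ∀ y : Ω, (y ∈ Subgen p A ∧ p x y = pSet p x A) →
        y ∈ Subgen p B ∧ p x y = pSet p x B := by
  obtain ⟨y, hy⟩ := exists_isProj h1 h2 h3 h4 h5 hstd hA hpos
  exact ⟨⟨y, hy, fun z hz => IsProj.unique h5 hstd hA hpos.ne' hz hy⟩,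
    fun B hB hBA _ hz => IsProj.of_subgen_eq h4 h5 hstd hA hB hBA hz⟩
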